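/- Let 𝔤 be a finite-dimensional real Lie algebra with a time-dependent inner product G(t) satisfying dG/dt = −2Ric_G (the Ricci flow for left-invariant metrics on a nilpotent group). Then d/dt R_G = 2|Ric_G|² and d/dt |Ric_G|² = −|δ(Rc_G)|², where R_G = −(1/4)|[·,·]|²_G, Rc_G = G⁻¹Ric_G, and δ(A)(x,y) = A[x,y] − [Ax,y] − [x,Ay]. -/

import Mathlib

open Matrix

namespace RFN

variable {n : ℕ}

/-- Bracket determined by structure constants: `[e i, e j] = ∑ k, c i j k • e k`. -/
def bra (c : Fin n → Fin n → Fin n → ℝ) (x y : Fin n → ℝ) : Fin n → ℝ :=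
  fun k => ∑ i, ∑ j, x i * y j * c i j k

/-- `c` is a family of structure constants of a Lie algebra. -/
def IsLieSC (c : Fin n → Fin n → Fin n → ℝ) : Prop :=
  (∀ i j k, c i j k = - c j i k) ∧
  ∀ x y z, bra c (bra c x y) z + bra c (bra c y z) x + bra c (bra c z x) y = 0

def adIter (c : Fin n → Fin n → Fin n → ℝ) (v : ℕ → Fin n → ℝ) :
    ℕ → (Fin n → ℝ) → (Fin n → ℝ)
  | 0, x => x
  | m + 1, x => bra c (v m) (adIter c v m x)

/-- Nilpotency of the Lie algebra with structure constants `c`. -/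
def IsNilpotentSC (c : Fin n → Fin n → Fin n → ℝ) : Prop :=
  ∃ N : ℕ, ∀ v x, adIter c v N x = 0

/-- Inner product of vectors with respect to the metric matrix `G`. -/
def gdot (G : Matrix (Fin n) (Fin n) ℝ) (x y : Fin n → ℝ) : ℝ :=
  ∑ i, ∑ j, x i * G i j * y j

/-- Components of the Ricci bilinear form of the invariant metric `G`:
`Ric_G(x,y) = -(1/2) Σ G([x,e_i],[y,e_j])G^{ij} + (1/4) Σ G^{ip}G^{jq}G([e_i,e_j],x)G([e_p,e_q],y)`. -/
noncomputable def Ricm (c : Fin n → Fin n → Fin n → ℝ) (G : Matrix (Fin n) (Fin n) ℝ) :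
    Matrix (Fin n) (Fin n) ℝ :=
  Matrix.of fun a b =>
    -(1/2) * (∑ i, ∑ j, G⁻¹ i j * gdot G (c a i) (c b j))
    + (1/4) * (∑ i, ∑ j, ∑ p, ∑ q, G⁻¹ i p * G⁻¹ j q *
        (∑ k, c i j k * G k a) * (∑ l, c p q l * G l b))

/-- Scalar curvature `R_G = -(1/4)|[·,·]|²_G`. -/
noncomputable def scalR (c : Fin n → Fin n → Fin n → ℝ) (G : Matrix (Fin n) (Fin n) ℝ) : ℝ :=
  -(1/4) * (∑ i, ∑ j, ∑ p, ∑ q, G⁻¹ i p * G⁻¹ j q * gdot G (c i j) (c p q))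

/-- Ricci endomorphism `Rc_G = G⁻¹ Ric_G`. -/
noncomputable def Rc (c : Fin n → Fin n → Fin n → ℝ) (G : Matrix (Fin n) (Fin n) ℝ) :
    Matrix (Fin n) (Fin n) ℝ := G⁻¹ * Ricm c G

/-- `δ(A)(e_i,e_j) = A[e_i,e_j] - [A e_i, e_j] - [e_i, A e_j]` (components). -/
def deltaE (c : Fin n → Fin n → Fin n → ℝ) (A : Matrix (Fin n) (Fin n) ℝ) :
    Fin n → Fin n → Fin n → ℝ :=
  fun i j k => (∑ l, A k l * c i j l) - (∑ l, A l i * c l j k) - (∑ l, A l j * c i l k)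

/-- The inner product on `Λ²𝔤*⊗𝔤` induced by `G` (full sum over ordered pairs). -/
noncomputable def tinner (G : Matrix (Fin n) (Fin n) ℝ) (μ ν : Fin n → Fin n → Fin n → ℝ) : ℝ :=
  ∑ i, ∑ j, ∑ p, ∑ q, G⁻¹ i p * G⁻¹ j q * gdot G (μ i j) (ν p q)

/-- The (Hilbert–Schmidt) inner product of endomorphisms induced by `G`. -/
noncomputable def einner (G : Matrix (Fin n) (Fin n) ℝ) (A B : Matrix (Fin n) (Fin n) ℝ) : ℝ :=
  ∑ i, ∑ j, G⁻¹ i j * gdot G (fun k => A k i) (fun k => B k j)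

/-- The inner product of bilinear forms induced by `G`. -/
noncomputable def binner (G : Matrix (Fin n) (Fin n) ℝ) (S T : Matrix (Fin n) (Fin n) ℝ) : ℝ :=
  ∑ i, ∑ j, ∑ p, ∑ q, G⁻¹ i p * G⁻¹ j q * S i j * T p q

/-- `|Ric_G|²`. -/
noncomputable def ric2 (c : Fin n → Fin n → Fin n → ℝ) (G : Matrix (Fin n) (Fin n) ℝ) : ℝ :=
  binner G (Ricm c G) (Ricm c G)

/-- The functional `W₊(G,τ) = τ R_G + τ² |Ric_G|²`. -/
noncomputable def Wplus (c : Fin n → Fin n → Fin n → ℝ) (G : Matrix (Fin n) (Fin n) ℝ) (τ : ℝ) : ℝ :=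
  τ * scalR c G + τ ^ 2 * ric2 c G

/-- Structure constants of the 3-dimensional Heisenberg Lie algebra: `[e₀,e₁] = e₂`, `e₂` central. -/
def heis : Fin 3 → Fin 3 → Fin 3 → ℝ := fun i j k =>
  if i = 0 ∧ j = 1 ∧ k = 2 then 1 else if i = 1 ∧ j = 0 ∧ k = 2 then -1 else 0

end RFN

/-!
Flattening a bracket `μ` to the vector `toVec μ` on `(𝔤 × 𝔤) × 𝔤` turns `tinner G` into the
quadratic form of `G⁻¹ ⊗ G⁻¹ ⊗ G` and `μ ↦ δ_μ(A)` into multiplication by `deltaMat A`.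
Along `G' = -2 Ric = -2 G Rc` one has `(G⁻¹)' = 2 Rc G⁻¹`, and the product rule gives
`d/dt ⟨μ, ν⟩ = -2 ⟨δ_μ(Rc), ν⟩` for fixed `μ, ν`.
Two algebraic facts finish the proof: the moment-map identity `⟨δ_c(A), c⟩ = 4 tr(Rc A)`, which
with `R = -¼ |c|²` gives `R' = 2 tr(Rc²) = 2 |Ric|²`, and the `G`-symmetry of `δ(Rc)`.
Since `tr(Rc B) = ¼ ⟨δ_c(B), c⟩` for every `B`, the entries of `Rc` are differentiable and
`(tr Rc²)' = 2 tr(Rc' Rc) = -⟨δ_{δ_c(Rc)}(Rc), c⟩ = -|δ_c(Rc)|²`.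
-/

open Kronecker

namespace RFN

section Calculus

variable {𝕜 : Type*} [NontriviallyNormedField 𝕜] {m : Type*} {t : 𝕜}

lemma differentiableAt_det [Fintype m] [DecidableEq m] {G : 𝕜 → Matrix m m 𝕜}
    (hG : ∀ i j, DifferentiableAt 𝕜 (fun u => G u i j) t) :
    DifferentiableAt 𝕜 (fun u => (G u).det) t := by
  simp only [det_apply']
  fun_prop

lemma differentiableAt_inv_apply [Fintype m] [DecidableEq m] {G : 𝕜 → Matrix m m 𝕜}
    (hG : ∀ i j, DifferentiableAt 𝕜 (fun u => G u i j) t) (hdet : (G t).det ≠ 0) (i j : m) :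
    DifferentiableAt 𝕜 (fun u => (G u)⁻¹ i j) t := by
  have hadj : DifferentiableAt 𝕜 (fun u => (G u).adjugate i j) t := by
    simp only [adjugate_apply]
    refine differentiableAt_det fun k l => ?_
    by_cases hk : k = j
    · simp [updateRow_apply, hk]
    · simpa [updateRow_apply, hk] using hG k l
  simp only [inv_def, Matrix.smul_apply, smul_eq_mul, Ring.inverse_eq_inv']
  exact ((differentiableAt_det hG).inv hdet).mul hadj

lemma hasDerivAt_inv_apply [Fintype m] [DecidableEq m] {G : 𝕜 → Matrix m m 𝕜} {G' : Matrix m m 𝕜}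
    (hG : ∀ i j, HasDerivAt (fun u => G u i j) (G' i j) t) (hdet : (G t).det ≠ 0) (i j : m) :
    HasDerivAt (fun u => (G u)⁻¹ i j) ((-((G t)⁻¹ * G' * (G t)⁻¹)) i j) t := by
  have hdiff : ∀ i j, DifferentiableAt 𝕜 (fun u => G u i j) t :=
    fun i j => (hG i j).differentiableAt
  set J' : Matrix m m 𝕜 := of fun i j => deriv (fun u => (G u)⁻¹ i j) t
  have hJ : ∀ i j, HasDerivAt (fun u => (G u)⁻¹ i j) (J' i j) t :=
    fun i j => (differentiableAt_inv_apply hdiff hdet i j).hasDerivAt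
  have hinv_mul : ∀ᶠ u in nhds t, (G u)⁻¹ * G u = 1 :=
    ((differentiableAt_det hdiff).continuousAt.eventually_ne hdet).mono fun u hu =>
      nonsing_inv_mul _ (isUnit_iff_ne_zero.mpr hu)
  have hprod : J' * G t = -((G t)⁻¹ * G') := by
    refine eq_neg_of_add_eq_zero_left (ext fun a b => ?_)
    have hconst : HasDerivAt (fun u => ∑ k, (G u)⁻¹ a k * G u k b) 0 t := by
      refine (hasDerivAt_const t ((1 : Matrix m m 𝕜) a b)).congr_of_eventuallyEq ?_
      filter_upwards [hinv_mul] with u hu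
      rw [← mul_apply, hu]
    have h := HasDerivAt.fun_sum (u := Finset.univ) fun k _ => (hJ a k).mul (hG k b)
    simpa [mul_apply, Finset.sum_add_distrib] using h.unique hconst
  have hJ'_eq : J' = -((G t)⁻¹ * G' * (G t)⁻¹) := by
    rw [← neg_mul, ← hprod, Matrix.mul_assoc, mul_nonsing_inv _ (isUnit_iff_ne_zero.mpr hdet),
      Matrix.mul_one]
  exact hJ'_eq ▸ hJ i j

lemma hasDerivAt_dotProduct_mulVec [Fintype m] {K : 𝕜 → Matrix m m 𝕜} {K' : Matrix m m 𝕜}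
    (hK : ∀ a b, HasDerivAt (fun u => K u a b) (K' a b) t) (x y : m → 𝕜) :
    HasDerivAt (fun u => x ⬝ᵥ K u *ᵥ y) (x ⬝ᵥ K' *ᵥ y) t := by
  simp only [dotProduct, mulVec]
  exact HasDerivAt.fun_sum fun a _ => (HasDerivAt.fun_sum fun b _ =>
    (hK a b).mul_const (y b)).const_mul (x a)

lemma hasDerivAt_trace_mul [Fintype m] {X Y : 𝕜 → Matrix m m 𝕜} {X' Y' : Matrix m m 𝕜}
    (hX : ∀ a b, HasDerivAt (fun u => X u a b) (X' a b) t)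
    (hY : ∀ a b, HasDerivAt (fun u => Y u a b) (Y' a b) t) :
    HasDerivAt (fun u => trace (X u * Y u)) (trace (X' * Y t) + trace (X t * Y')) t := by
  simp only [trace, diag, mul_apply, ← Finset.sum_add_distrib]
  exact HasDerivAt.fun_sum fun a _ => HasDerivAt.fun_sum fun b _ => (hX a b).fun_mul (hY b a)

lemma hasDerivAt_kronecker_apply {P Q R : 𝕜 → Matrix m m 𝕜} {P' Q' R' : Matrix m m 𝕜}
    (hP : ∀ i j, HasDerivAt (fun u => P u i j) (P' i j) t)
    (hQ : ∀ i j, HasDerivAt (fun u => Q u i j) (Q' i j) t)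
    (hR : ∀ i j, HasDerivAt (fun u => R u i j) (R' i j) t) (a b : (m × m) × m) :
    HasDerivAt (fun u => (P u ⊗ₖ Q u ⊗ₖ R u) a b)
      ((P' ⊗ₖ Q t ⊗ₖ R t + P t ⊗ₖ Q' ⊗ₖ R t + P t ⊗ₖ Q t ⊗ₖ R') a b) t := by
  obtain ⟨⟨i, j⟩, k⟩ := a
  obtain ⟨⟨p, q⟩, l⟩ := b
  simp only [kronecker_apply, Matrix.add_apply]
  exact (((hP i p).fun_mul (hQ j q)).fun_mul (hR k l)).congr_deriv (by ring)

end Calculus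

section Bilinear

variable {R : Type*} [CommSemiring R] {m : Type*} [Fintype m]

lemma mulVec_dotProduct_mulVec (M N : Matrix m m R) (x y : m → R) :
    (M *ᵥ x) ⬝ᵥ N *ᵥ y = x ⬝ᵥ (Mᵀ * N) *ᵥ y := by
  rw [← vecMul_transpose, ← dotProduct_mulVec, mulVec_mulVec]

lemma dotProduct_transpose_mulVec_self (M : Matrix m m R) (x : m → R) :
    x ⬝ᵥ Mᵀ *ᵥ x = x ⬝ᵥ M *ᵥ x := by
  rw [dotProduct_mulVec, vecMul_transpose, dotProduct_comm]

end Bilinear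

variable {n : ℕ}

def toVec (μ : Fin n → Fin n → Fin n → ℝ) : (Fin n × Fin n) × Fin n → ℝ :=
  fun x => μ x.1.1 x.1.2 x.2

def deltaMat (A : Matrix (Fin n) (Fin n) ℝ) :
    Matrix ((Fin n × Fin n) × Fin n) ((Fin n × Fin n) × Fin n) ℝ :=
  1 ⊗ₖ 1 ⊗ₖ A - Aᵀ ⊗ₖ 1 ⊗ₖ 1 - 1 ⊗ₖ Aᵀ ⊗ₖ 1

lemma tinner_eq_dotProduct (G : Matrix (Fin n) (Fin n) ℝ) (μ ν : Fin n → Fin n → Fin n → ℝ) :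
    tinner G μ ν = toVec μ ⬝ᵥ (G⁻¹ ⊗ₖ G⁻¹ ⊗ₖ G) *ᵥ toVec ν := by
  simp only [tinner, gdot, toVec, dotProduct, mulVec, Fintype.sum_prod_type, kronecker_apply,
    Finset.mul_sum]
  refine Finset.sum_congr rfl fun i _ => Finset.sum_congr rfl fun j _ => ?_
  rw [Finset.sum_comm_cycle]
  refine Finset.sum_congr rfl fun k _ => Finset.sum_congr rfl fun p _ =>
    Finset.sum_congr rfl fun q _ => Finset.sum_congr rfl fun l _ => by ring

lemma toVec_deltaE (μ : Fin n → Fin n → Fin n → ℝ) (A : Matrix (Fin n) (Fin n) ℝ) :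
    toVec (deltaE μ A) = deltaMat A *ᵥ toVec μ := by
  ext ⟨⟨i, j⟩, k⟩
  simp [toVec, deltaE, deltaMat, mulVec, dotProduct, Fintype.sum_prod_type, sub_mul,
    Finset.sum_sub_distrib, one_apply]

lemma deltaMat_transpose_mul_kronecker (A P Q R : Matrix (Fin n) (Fin n) ℝ) :
    (deltaMat A)ᵀ * (P ⊗ₖ Q ⊗ₖ R) =
      P ⊗ₖ Q ⊗ₖ (Aᵀ * R) - (A * P) ⊗ₖ Q ⊗ₖ R - P ⊗ₖ (A * Q) ⊗ₖ R := by
  simp only [deltaMat, transpose_sub, Matrix.sub_mul, ← kroneckerMap_transpose, transpose_one,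
    transpose_transpose, ← mul_kronecker_mul, Matrix.one_mul]

lemma kronecker_mul_deltaMat (A P Q R : Matrix (Fin n) (Fin n) ℝ) :
    (P ⊗ₖ Q ⊗ₖ R) * deltaMat A =
      P ⊗ₖ Q ⊗ₖ (R * A) - (P * Aᵀ) ⊗ₖ Q ⊗ₖ R - P ⊗ₖ (Q * Aᵀ) ⊗ₖ R := by
  simp only [deltaMat, Matrix.mul_sub, ← mul_kronecker_mul, Matrix.mul_one]

lemma hasDerivAt_tinner {G : ℝ → Matrix (Fin n) (Fin n) ℝ} {S : Matrix (Fin n) (Fin n) ℝ}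
    {t : ℝ} (hGt : (G t).IsSymm) (hdet : (G t).det ≠ 0) (hS : S.IsSymm)
    (hG : ∀ i j, HasDerivAt (fun u => G u i j) (-2 * S i j) t) (μ ν : Fin n → Fin n → Fin n → ℝ) :
    HasDerivAt (fun u => tinner (G u) μ ν) (-2 * tinner (G t) (deltaE μ ((G t)⁻¹ * S)) ν) t := by
  have hG' : ∀ i j, HasDerivAt (fun u => G u i j) (((-2 : ℝ) • S) i j) t := hG
  have hJ := hasDerivAt_inv_apply hG' hdet
  have hK := hasDerivAt_kronecker_apply hJ hJ hG'
  simp_rw [tinner_eq_dotProduct]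
  refine (hasDerivAt_dotProduct_mulVec hK _ _).congr_deriv ?_
  have hAG : ((G t)⁻¹ * S)ᵀ * G t = S := by
    rw [transpose_mul, hS.eq, transpose_nonsing_inv, hGt.eq, Matrix.mul_assoc,
      nonsing_inv_mul _ (isUnit_iff_ne_zero.mpr hdet), Matrix.mul_one]
  rw [toVec_deltaE, mulVec_dotProduct_mulVec, deltaMat_transpose_mul_kronecker, hAG]
  set J := (G t)⁻¹
  have hK' : (-(J * (-2 : ℝ) • S * J)) ⊗ₖ J ⊗ₖ G t + J ⊗ₖ (-(J * (-2 : ℝ) • S * J)) ⊗ₖ G t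
      + J ⊗ₖ J ⊗ₖ ((-2 : ℝ) • S) = (-2 : ℝ) • (J ⊗ₖ J ⊗ₖ S - (J * S * J) ⊗ₖ J ⊗ₖ G t
      - J ⊗ₖ (J * S * J) ⊗ₖ G t) := by
    rw [Matrix.mul_smul, Matrix.smul_mul]
    ext ⟨⟨i, j⟩, k⟩ ⟨⟨p, q⟩, l⟩
    simp only [kronecker_apply, Matrix.add_apply, Matrix.sub_apply, Matrix.smul_apply,
      Matrix.neg_apply, smul_eq_mul]
    ring
  rw [hK', smul_mulVec, dotProduct_smul, smul_eq_mul]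

lemma tinner_deltaE_comm {G A : Matrix (Fin n) (Fin n) ℝ} (hdet : G.det ≠ 0)
    (hA : Aᵀ * G = G * A) (μ ν : Fin n → Fin n → Fin n → ℝ) :
    tinner G (deltaE μ A) ν = tinner G μ (deltaE ν A) := by
  have hu := isUnit_iff_ne_zero.mpr hdet
  have hJA : G⁻¹ * Aᵀ = A * G⁻¹ := by
    calc G⁻¹ * Aᵀ = G⁻¹ * (Aᵀ * G) * G⁻¹ := by
          rw [Matrix.mul_assoc, Matrix.mul_assoc, mul_nonsing_inv _ hu, Matrix.mul_one]
      _ = A * G⁻¹ := by rw [hA, ← Matrix.mul_assoc, nonsing_inv_mul _ hu, Matrix.one_mul]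
  rw [tinner_eq_dotProduct, tinner_eq_dotProduct, toVec_deltaE, toVec_deltaE,
    mulVec_dotProduct_mulVec, mulVec_mulVec, deltaMat_transpose_mul_kronecker,
    kronecker_mul_deltaMat, hA, hJA]

lemma trace_Ricm_mul (c : Fin n → Fin n → Fin n → ℝ) (G M : Matrix (Fin n) (Fin n) ℝ) :
    trace (Ricm c G * M) = -(1/2) * (toVec c ⬝ᵥ (Mᵀ ⊗ₖ G⁻¹ ⊗ₖ G) *ᵥ toVec c)
      + (1/4) * (toVec c ⬝ᵥ (G⁻¹ ⊗ₖ G⁻¹ ⊗ₖ (G * Mᵀ * Gᵀ)) *ᵥ toVec c) := by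
  simp only [trace, diag, mul_apply, Ricm, of_apply, add_mul, Finset.sum_add_distrib, mul_assoc,
    ← Finset.mul_sum]
  congr 2
  · simp only [gdot, toVec, dotProduct, mulVec, Fintype.sum_prod_type, kronecker_apply,
      transpose_apply, Finset.mul_sum, Finset.sum_mul]
    refine Finset.sum_congr rfl fun a _ => ?_
    conv_lhs => rw [Finset.sum_comm]
    refine Finset.sum_congr rfl fun i _ => ?_
    conv_lhs => rw [Finset.sum_comm_cycle]
    refine Finset.sum_congr rfl fun k _ => Finset.sum_congr rfl fun b _ =>
      Finset.sum_congr rfl fun j _ => Finset.sum_congr rfl fun l _ => by ring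
  · simp only [toVec, dotProduct, mulVec, Fintype.sum_prod_type, kronecker_apply,
      transpose_apply, mul_apply, Finset.mul_sum, Finset.sum_mul]
    conv_lhs =>
      rw [Finset.sum_comm_cycle]; enter [2, i]
      rw [Finset.sum_comm_cycle]; enter [2, j]
      rw [Finset.sum_comm_cycle]; enter [2, p]
      rw [Finset.sum_comm_cycle]; enter [2, q]
      rw [Finset.sum_comm_cycle]; enter [2, l]
      rw [Finset.sum_comm_cycle]
    conv_rhs =>
      enter [2, i, 2, j]
      rw [← Finset.sum_comm_cycle]; enter [2, p, 2, q]
      rw [Finset.sum_comm]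
    refine Finset.sum_congr rfl fun i _ => Finset.sum_congr rfl fun j _ =>
      Finset.sum_congr rfl fun p _ => Finset.sum_congr rfl fun q _ =>
      Finset.sum_congr rfl fun l _ => Finset.sum_congr rfl fun k _ =>
      Finset.sum_congr rfl fun a _ => Finset.sum_congr rfl fun b _ => by ring

lemma Ricm_isSymm (c : Fin n → Fin n → Fin n → ℝ) {G : Matrix (Fin n) (Fin n) ℝ}
    (hG : G.IsSymm) : (Ricm c G).IsSymm := by
  have hJ : (G⁻¹)ᵀ = G⁻¹ := by rw [transpose_nonsing_inv, hG.eq]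
  refine ext_iff_trace_mul_right.mpr fun M => ?_
  rw [← trace_transpose, transpose_mul, transpose_transpose, trace_mul_comm, trace_Ricm_mul,
    trace_Ricm_mul, ← dotProduct_transpose_mulVec_self (Mᵀ ⊗ₖ _ ⊗ₖ _),
    ← dotProduct_transpose_mulVec_self (_ ⊗ₖ _ ⊗ₖ (G * Mᵀ * Gᵀ))]
  simp only [← kroneckerMap_transpose, transpose_transpose, transpose_mul, hJ, hG.eq,
    Matrix.mul_assoc]

lemma transpose_Rc_mul (c : Fin n → Fin n → Fin n → ℝ) {G : Matrix (Fin n) (Fin n) ℝ}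
    (hG : G.IsSymm) (hdet : G.det ≠ 0) : (Rc c G)ᵀ * G = G * Rc c G := by
  have hu := isUnit_iff_ne_zero.mpr hdet
  rw [Rc, transpose_mul, (Ricm_isSymm c hG).eq, transpose_nonsing_inv, hG.eq, Matrix.mul_assoc,
    nonsing_inv_mul _ hu, ← Matrix.mul_assoc, mul_nonsing_inv _ hu, Matrix.mul_one,
    Matrix.one_mul]

lemma binner_eq_trace {G S T : Matrix (Fin n) (Fin n) ℝ} (hG : G.IsSymm) (hT : T.IsSymm) :
    binner G S T = trace (G⁻¹ * S * G⁻¹ * T) := by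
  have hJ : G⁻¹.IsSymm := by rw [IsSymm, transpose_nonsing_inv, hG.eq]
  simp only [binner, trace, diag, mul_apply, Finset.sum_mul]
  conv_lhs =>
    rw [Finset.sum_comm_cycle]; enter [2, p]
    rw [Finset.sum_comm_cycle]; enter [2, q]
    rw [Finset.sum_comm]
  refine Finset.sum_congr rfl fun p _ => Finset.sum_congr rfl fun q _ =>
    Finset.sum_congr rfl fun j _ => Finset.sum_congr rfl fun i _ => ?_
  rw [hJ.apply i p, hT.apply p q]
  ring

lemma ric2_eq_trace (c : Fin n → Fin n → Fin n → ℝ) {G : Matrix (Fin n) (Fin n) ℝ}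
    (hG : G.IsSymm) : ric2 c G = trace (Rc c G * Rc c G) := by
  rw [ric2, binner_eq_trace hG (Ricm_isSymm c hG), Rc, ← Matrix.mul_assoc]

lemma toVec_dotProduct_kronecker_comm {c : Fin n → Fin n → Fin n → ℝ}
    (hc : ∀ i j k, c i j k = - c j i k) (P Q R : Matrix (Fin n) (Fin n) ℝ) :
    toVec c ⬝ᵥ (P ⊗ₖ Q ⊗ₖ R) *ᵥ toVec c = toVec c ⬝ᵥ (Q ⊗ₖ P ⊗ₖ R) *ᵥ toVec c := by
  simp only [toVec, dotProduct, mulVec, Fintype.sum_prod_type, kronecker_apply]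
  conv_lhs => rw [Finset.sum_comm]
  refine Finset.sum_congr rfl fun i _ => Finset.sum_congr rfl fun j _ =>
    Finset.sum_congr rfl fun k _ => ?_
  conv_lhs => rw [Finset.sum_comm]
  rw [hc j i k, neg_mul, ← mul_neg, ← Finset.sum_neg_distrib]
  refine congrArg _ (Finset.sum_congr rfl fun p _ => ?_)
  rw [← Finset.sum_neg_distrib]
  refine Finset.sum_congr rfl fun q _ => ?_
  rw [← Finset.sum_neg_distrib]
  refine Finset.sum_congr rfl fun l _ => ?_
  rw [hc q p l]
  ring

lemma tinner_deltaE_eq_trace_Rc_mul {c : Fin n → Fin n → Fin n → ℝ} (hc : ∀ i j k, c i j k = - c j i k)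
    {G : Matrix (Fin n) (Fin n) ℝ} (hG : G.IsSymm) (hdet : G.det ≠ 0)
    (A : Matrix (Fin n) (Fin n) ℝ) :
    tinner G (deltaE c A) c = 4 * trace (Rc c G * A) := by
  have hJ : (G⁻¹)ᵀ = G⁻¹ := by rw [transpose_nonsing_inv, hG.eq]
  have hGAG : G * (A * G⁻¹)ᵀ * Gᵀ = Aᵀ * G := by
    rw [transpose_mul, hJ, hG.eq, ← Matrix.mul_assoc,
      mul_nonsing_inv _ (isUnit_iff_ne_zero.mpr hdet), Matrix.one_mul]
  rw [tinner_eq_dotProduct, toVec_deltaE, mulVec_dotProduct_mulVec,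
    deltaMat_transpose_mul_kronecker, Rc, Matrix.mul_assoc, trace_mul_comm, Matrix.mul_assoc,
    trace_Ricm_mul, hGAG]
  simp only [sub_mulVec, dotProduct_sub]
  rw [toVec_dotProduct_kronecker_comm hc _ (A * G⁻¹),
    ← dotProduct_transpose_mulVec_self ((A * G⁻¹)ᵀ ⊗ₖ _ ⊗ₖ _)]
  simp only [← kroneckerMap_transpose, transpose_transpose, hJ, hG.eq]
  ring

section RicciFlow

variable {c : Fin n → Fin n → Fin n → ℝ} {G : ℝ → Matrix (Fin n) (Fin n) ℝ} {t : ℝ}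

lemma hasDerivAt_scalR (hc : ∀ i j k, c i j k = - c j i k) (hG : (G t).IsSymm)
    (hdet : (G t).det ≠ 0)
    (hflow : ∀ i j, HasDerivAt (fun u => G u i j) (-2 * Ricm c (G t) i j) t) :
    HasDerivAt (fun u => scalR c (G u)) (2 * ric2 c (G t)) t := by
  refine ((hasDerivAt_tinner hG hdet (Ricm_isSymm c hG) hflow c c).const_mul
    (-(1/4) : ℝ)).congr_deriv ?_
  rw [tinner_deltaE_eq_trace_Rc_mul hc hG hdet, ric2_eq_trace c hG, Rc]
  ring

lemma hasDerivAt_trace_Rc_mul (hc : ∀ i j k, c i j k = - c j i k) (hG : ∀ u, (G u).IsSymm)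
    (hdet : ∀ u, (G u).det ≠ 0)
    (hflow : ∀ i j, HasDerivAt (fun u => G u i j) (-2 * Ricm c (G t) i j) t)
    (B : Matrix (Fin n) (Fin n) ℝ) :
    HasDerivAt (fun u => trace (Rc c (G u) * B))
      (-(1/2) * tinner (G t) (deltaE (deltaE c B) (Rc c (G t))) c) t := by
  have hfun : (fun u => trace (Rc c (G u) * B)) =
      fun u => (1/4) * tinner (G u) (deltaE c B) c :=
    funext fun u => by rw [tinner_deltaE_eq_trace_Rc_mul hc (hG u) (hdet u)]; ring
  rw [hfun]
  exact ((hasDerivAt_tinner (hG t) (hdet t) (Ricm_isSymm c (hG t)) hflow _ c).const_mul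
    _).congr_deriv (by rw [Rc]; ring)

lemma hasDerivAt_ric2 (hc : ∀ i j k, c i j k = - c j i k) (hG : ∀ u, (G u).IsSymm)
    (hdet : ∀ u, (G u).det ≠ 0)
    (hflow : ∀ i j, HasDerivAt (fun u => G u i j) (-2 * Ricm c (G t) i j) t) :
    HasDerivAt (fun u => ric2 c (G u))
      (-(tinner (G t) (deltaE c (Rc c (G t))) (deltaE c (Rc c (G t))))) t := by
  have htrace := hasDerivAt_trace_Rc_mul hc hG hdet hflow
  set A := Rc c (G t)
  obtain ⟨Rc', hentry⟩ : ∃ Rc' : Matrix (Fin n) (Fin n) ℝ,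
      ∀ a b, HasDerivAt (fun u => Rc c (G u) a b) (Rc' a b) t :=
    ⟨of fun a b => _, fun a b => by simpa [trace_mul_single] using htrace (single b a 1)⟩
  have hRc' : trace (Rc' * A) = -(1/2) * tinner (G t) (deltaE (deltaE c A) A) c := by
    simpa using (hasDerivAt_trace_mul (Y := fun _ => A) (Y' := 0) hentry
      fun a b => hasDerivAt_const t (A a b)).unique (htrace A)
  rw [show (fun u => ric2 c (G u)) = fun u => trace (Rc c (G u) * Rc c (G u)) from
    funext fun u => ric2_eq_trace c (hG u)]
  refine (hasDerivAt_trace_mul hentry hentry).congr_deriv ?_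
  rw [trace_mul_comm A, hRc', tinner_deltaE_comm (hdet t) (transpose_Rc_mul c (hG t) (hdet t))]
  ring

end RicciFlow

end RFN

open RFN Matrix

theorem stmt5_general {n : ℕ} (c : Fin n → Fin n → Fin n → ℝ) (hc : IsLieSC c)
    (G : ℝ → Matrix (Fin n) (Fin n) ℝ) (hpd : ∀ t, (G t).PosDef)
    (hflow : ∀ (t : ℝ) (i j : Fin n),
      HasDerivAt (fun u => G u i j) (-2 * Ricm c (G t) i j) t) (t : ℝ) :
    HasDerivAt (fun u => scalR c (G u)) (2 * ric2 c (G t)) t ∧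
    HasDerivAt (fun u => ric2 c (G u))
      (-(tinner (G t) (deltaE c (Rc c (G t))) (deltaE c (Rc c (G t))))) t := by
  have hsym : ∀ u, (G u).IsSymm := fun u => isHermitian_iff_isSymm.mp (hpd u).isHermitian
  have hdet : ∀ u, (G u).det ≠ 0 := fun u => (hpd u).det_pos.ne'
  exact ⟨hasDerivAt_scalR hc.1 (hsym t) (hdet t) (hflow t),
    hasDerivAt_ric2 hc.1 hsym hdet (hflow t)⟩

theorem stmt5 {n : ℕ} (c : Fin n → Fin n → Fin n → ℝ) (hc : IsLieSC c)
    (hnil : IsNilpotentSC c)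
    (G : ℝ → Matrix (Fin n) (Fin n) ℝ) (hpd : ∀ t, (G t).PosDef) (hsym : ∀ t, (G t).IsSymm)
    (hflow : ∀ (t : ℝ) (i j : Fin n),
      HasDerivAt (fun u => G u i j) (-2 * Ricm c (G t) i j) t) (t : ℝ) :
    HasDerivAt (fun u => scalR c (G u)) (2 * ric2 c (G t)) t ∧
    HasDerivAt (fun u => ric2 c (G u))
      (-(tinner (G t) (deltaE c (Rc c (G t))) (deltaE c (Rc c (G t))))) t :=
  stmt5_general c hc G hpd hflow t
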